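/- Let S be a set of points in general position in the plane, and let a, b ∈ S be two vertices of the boundary of the convex hull of S such that one of the two open halfplanes bounded by the line through a and b contains exactly 3 points of S and the other open halfplane contains at least 1 point of S. Then there do not exist two plane Hamiltonian paths π1, π2 on S whose set of common edges is exactly the segment ab. -/

import Mathlib

/-! Since `a` and `b` are extreme points of the convex hull of `S`, the line `ab` meets the hull
only in the segment `ab`. Hence in a plane path through the edge `ab` no edge crosses the line
`ab`: the points on either side form a contiguous block of the path. The three points on the
small side therefore appear consecutively, and the middle one is joined to the other two. Two such
stars on the same three points always share an edge, and that edge is not `ab`. -/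

open Set
open scoped Classical

noncomputable section

/-- Points in the plane. -/
abbrev Pt : Type := ℝ × ℝ

/-- Orientation determinant of the triple `(a, b, p)`:
positive iff `p` lies strictly to the left of the directed line from `a` to `b`. -/
def det3 (a b p : Pt) : ℝ :=
  (b.1 - a.1) * (p.2 - a.2) - (b.2 - a.2) * (p.1 - a.1)

/-- A finite point set is in general position if no three of its points are collinear. -/
def GenPos (S : Finset Pt) : Prop :=
  ∀ p ∈ S, ∀ q ∈ S, ∀ r ∈ S,
    p ≠ q → p ≠ r → q ≠ r → ¬ Collinear ℝ ({p, q, r} : Set Pt)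

/-- The list of (directed) edges of a polygonal path given by its list of vertices. -/
def edgeList (l : List Pt) : List (Pt × Pt) := l.zip l.tail

/-- The segment `ab` is an edge of the path `l`, i.e. `a` and `b` are consecutive on `l`. -/
def IsEdgeOf (a b : Pt) (l : List Pt) : Prop :=
  (a, b) ∈ edgeList l ∨ (b, a) ∈ edgeList l

/-- `l` is a plane (crossing-free) Hamiltonian path on the point set `S`:
its vertices are exactly the points of `S`, each visited once, and any two distinct
edges intersect only in common endpoints. -/
def PlanePath (S : Finset Pt) (l : List Pt) : Prop :=
  l.Nodup ∧ l.toFinset = S ∧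
  ∀ e ∈ edgeList l, ∀ f ∈ edgeList l, e ≠ f →
    segment ℝ e.1 e.2 ∩ segment ℝ f.1 f.2 ⊆
      (({e.1, e.2} : Set Pt) ∩ ({f.1, f.2} : Set Pt))

/-- Two paths are edge-disjoint: no segment is an edge of both. -/
def EdgeDisjoint (l₁ l₂ : List Pt) : Prop :=
  ∀ x y : Pt, IsEdgeOf x y l₁ → ¬ IsEdgeOf x y l₂

/-- `p` is a vertex of the boundary of the convex hull of `S`. -/
def HullVertex (S : Finset Pt) (p : Pt) : Prop :=
  p ∈ Set.extremePoints ℝ (convexHull ℝ (S : Set Pt))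

/-- `ab` is an edge of the boundary of the convex hull of `S`, i.e. `a` and `b` are
consecutive hull vertices: all other points of `S` lie strictly on one side of line `ab`. -/
def IsHullEdge (S : Finset Pt) (a b : Pt) : Prop :=
  a ∈ S ∧ b ∈ S ∧ a ≠ b ∧
  ((∀ p ∈ S, p ≠ a → p ≠ b → 0 < det3 a b p) ∨
   (∀ p ∈ S, p ≠ a → p ≠ b → det3 a b p < 0))

/-- The segment `xy` is a bridge over the line through `a` and `b`:
it crosses the line `ℓ(ab)` but not the segment `ab`. -/
def IsBridge (a b x y : Pt) : Prop :=
  det3 a b x * det3 a b y < 0 ∧ segment ℝ x y ∩ segment ℝ a b = ∅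

/-- The set of common edges of the two paths is exactly the segment `ab`. -/
def SharesExactly (a b : Pt) (l₁ l₂ : List Pt) : Prop :=
  IsEdgeOf a b l₁ ∧ IsEdgeOf a b l₂ ∧
  ∀ x y : Pt, IsEdgeOf x y l₁ → IsEdgeOf x y l₂ → ({x, y} : Set Pt) = ({a, b} : Set Pt)

lemma det3_swap (a b p : Pt) : det3 b a p = -det3 a b p := by unfold det3; ring

@[simp] lemma det3_left (a b : Pt) : det3 a b a = 0 := by unfold det3; ring

@[simp] lemma det3_right (a b : Pt) : det3 a b b = 0 := by unfold det3; ring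

lemma det3_lineMap (a b x y : Pt) (t : ℝ) :
    det3 a b (AffineMap.lineMap x y t) = (1 - t) * det3 a b x + t * det3 a b y := by
  simp only [det3, AffineMap.lineMap_apply_module, Prod.fst_add, Prod.snd_add, Prod.smul_fst,
    Prod.smul_snd, smul_eq_mul]
  ring

lemma exists_mem_segment_det3_eq_zero {a b x y : Pt} (h : det3 a b x * det3 a b y < 0) :
    ∃ z ∈ segment ℝ x y, det3 a b z = 0 := by
  have hx : det3 a b x - det3 a b y ≠ 0 := by
    intro h0
    rw [sub_eq_zero.1 h0] at h
    exact (mul_self_nonneg _).not_gt h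
  refine ⟨AffineMap.lineMap x y (det3 a b x / (det3 a b x - det3 a b y)),
    segment_eq_image_lineMap ℝ x y ▸ Set.mem_image_of_mem _ ⟨?_, ?_⟩, ?_⟩
  · rcases mul_neg_iff.1 h with ⟨h1, h2⟩ | ⟨h1, h2⟩
    · exact div_nonneg h1.le (by linarith)
    · exact div_nonneg_of_nonpos h1.le (by linarith)
  · rcases mul_neg_iff.1 h with ⟨h1, h2⟩ | ⟨h1, h2⟩
    · exact (div_le_one (by linarith)).2 (by linarith)
    · exact (div_le_one_of_neg (by linarith)).2 (by linarith)
  · rw [det3_lineMap]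
    field_simp
    ring

lemma mem_line_of_det3_eq_zero {a b p : Pt} (hab : a ≠ b) (h : det3 a b p = 0) :
    p ∈ line[ℝ, a, b] := by
  have hD : (b.1 - a.1) ^ 2 + (b.2 - a.2) ^ 2 ≠ 0 := by
    intro hD
    have h1 : b.1 - a.1 = 0 := by nlinarith [sq_nonneg (b.1 - a.1), sq_nonneg (b.2 - a.2)]
    have h2 : b.2 - a.2 = 0 := by nlinarith [sq_nonneg (b.1 - a.1), sq_nonneg (b.2 - a.2)]
    exact hab (Prod.ext (by linarith) (by linarith))
  -- the parameter of the orthogonal projection of `p` onto the line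
  refine (mem_affineSpan_pair_iff_exists_lineMap_eq).2
    ⟨((p.1 - a.1) * (b.1 - a.1) + (p.2 - a.2) * (b.2 - a.2)) /
      ((b.1 - a.1) ^ 2 + (b.2 - a.2) ^ 2), ?_⟩
  unfold det3 at h
  ext <;> simp only [AffineMap.lineMap_apply_module, Prod.fst_add, Prod.snd_add, Prod.smul_fst,
    Prod.smul_snd, smul_eq_mul] <;> field_simp
  · linear_combination (b.2 - a.2) * h
  · linear_combination -(b.1 - a.1) * h

lemma GenPos.det3_ne_zero {S : Finset Pt} (hgp : GenPos S) {a b p : Pt} (ha : a ∈ S)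
    (hb : b ∈ S) (hp : p ∈ S) (hab : a ≠ b) (hpa : p ≠ a) (hpb : p ≠ b) : det3 a b p ≠ 0 :=
  fun h => hgp p hp a ha b hb hpa hpb hab
    (collinear_insert_of_mem_affineSpan_pair (mem_line_of_det3_eq_zero hab h))

lemma lineMap_mem_segment_of_mem_extremePoints {E : Type*} [AddCommGroup E] [Module ℝ E]
    {A : Set E} {a b : E} {t : ℝ} (ha : a ∈ A.extremePoints ℝ) (hb : b ∈ A.extremePoints ℝ)
    (hab : a ≠ b) (ht : AffineMap.lineMap a b t ∈ A) :
    AffineMap.lineMap a b t ∈ segment ℝ a b := by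
  rw [segment_eq_image_lineMap]
  refine ⟨t, ⟨?_, ?_⟩, rfl⟩
  · by_contra! h
    have : a ∈ openSegment ℝ (AffineMap.lineMap a b t) b := by
      rw [openSegment_eq_image_lineMap]
      refine ⟨-t / (1 - t), ⟨div_pos (by linarith) (by linarith), ?_⟩, ?_⟩
      · rw [div_lt_one (by linarith)]; linarith
      · have : 1 - t ≠ 0 := by linarith
        rw [AffineMap.lineMap_lineMap_left]
        convert AffineMap.lineMap_apply_zero (k := ℝ) a b using 2
        field_simp
        ring
    exact hab ((mem_extremePoints.1 ha).2 _ ht b hb.1 this).2.symm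
  · by_contra! h
    have : b ∈ openSegment ℝ a (AffineMap.lineMap a b t) := by
      rw [openSegment_eq_image_lineMap]
      refine ⟨1 / t, ⟨by positivity, by rw [div_lt_one (by linarith)]; linarith⟩, ?_⟩
      rw [AffineMap.lineMap_lineMap_right, one_div_mul_cancel (by linarith),
        AffineMap.lineMap_apply_one]
    exact hab ((mem_extremePoints.1 hb).2 a ha.1 _ ht this).1

lemma mem_segment_of_det3_eq_zero {S : Finset Pt} {a b z : Pt} (hab : a ≠ b)
    (ha : HullVertex S a) (hb : HullVertex S b) (hz : z ∈ convexHull ℝ (S : Set Pt))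
    (h : det3 a b z = 0) : z ∈ segment ℝ a b := by
  obtain ⟨t, rfl⟩ := mem_affineSpan_pair_iff_exists_lineMap_eq.1 (mem_line_of_det3_eq_zero hab h)
  exact lineMap_mem_segment_of_mem_extremePoints ha hb hab hz

lemma mem_edgeList_iff {x y : Pt} {l : List Pt} :
    (x, y) ∈ edgeList l ↔ ∃ P Q, l = P ++ x :: y :: Q := by
  induction l with
  | nil => simp [edgeList]
  | cons c t ih =>
    cases t with
    | nil =>
      simp only [edgeList, List.tail_cons, List.zip_nil_right, List.not_mem_nil, false_iff]
      rintro ⟨_ | ⟨p, P⟩, Q, h⟩ <;> simp at h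
    | cons d t =>
      have hE : edgeList (c :: d :: t) = (c, d) :: edgeList (d :: t) := rfl
      rw [hE, List.mem_cons, ih, Prod.ext_iff]
      constructor
      · rintro (⟨rfl, rfl⟩ | ⟨P, Q, h⟩)
        · exact ⟨[], t, rfl⟩
        · exact ⟨c :: P, Q, by rw [h, List.cons_append]⟩
      · rintro ⟨_ | ⟨p, P⟩, Q, h⟩
        · simp_all
        · simp only [List.cons_append, List.cons.injEq] at h
          exact Or.inr ⟨P, Q, h.2⟩

lemma isChain_iff_forall_mem_edgeList {R : Pt → Pt → Prop} {l : List Pt} :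
    l.IsChain R ↔ ∀ x y, (x, y) ∈ edgeList l → R x y := by
  simp only [List.isChain_iff_forall_rel_of_append_cons_cons, mem_edgeList_iff]
  grind

lemma IsEdgeOf.symm {x y : Pt} {l : List Pt} (h : IsEdgeOf x y l) : IsEdgeOf y x l := Or.symm h

lemma mem_edgeList_of_isInfix {M l : List Pt} (h : M <:+: l) {x y : Pt}
    (hxy : (x, y) ∈ edgeList M) : (x, y) ∈ edgeList l := by
  obtain ⟨s, t, rfl⟩ := h
  obtain ⟨P, Q, rfl⟩ := mem_edgeList_iff.1 hxy
  exact mem_edgeList_iff.2 ⟨s ++ P, Q ++ t, by simp⟩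

lemma List.forall_or_forall_not_of_isChain_iff {α : Type*} {p : α → Prop} {l : List α}
    (h : l.IsChain (fun x y => p x ↔ p y)) : (∀ x ∈ l, p x) ∨ ∀ x ∈ l, ¬p x := by
  cases l with
  | nil => simp
  | cons c l =>
    have : Trans (fun x y => p x ↔ p y) (fun x y => p x ↔ p y) (fun x y => p x ↔ p y) :=
      ⟨Iff.trans⟩
    have hc := (List.pairwise_cons.1 (List.isChain_iff_pairwise.1 h)).1
    by_cases hpc : p c
    · exact Or.inl fun x hx => (List.mem_cons.1 hx).elim (· ▸ hpc) fun hx => (hc x hx).1 hpc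
    · exact Or.inr fun x hx => (List.mem_cons.1 hx).elim (· ▸ hpc) fun hx => mt (hc x hx).2 hpc

lemma List.filter_pos_eq_self_or_nil {α : Type*} {f : α → ℝ} {l : List α}
    (h0 : ∀ x ∈ l, f x ≠ 0) (h : l.IsChain (fun x y => 0 ≤ f x * f y)) :
    l.filter (fun x => 0 < f x) = l ∨ l.filter (fun x => 0 < f x) = [] := by
  have hiff : l.IsChain (fun x y => 0 < f x ↔ 0 < f y) := by
    refine h.imp_of_mem_imp fun x y hx hy hxy => ?_
    rcases (h0 x hx).lt_or_gt with hx' | hx' <;> rcases (h0 y hy).lt_or_gt with hy' | hy' <;>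
      constructor <;> intro <;> nlinarith
  rcases List.forall_or_forall_not_of_isChain_iff hiff with hpos | hpos
  · exact Or.inl (List.filter_eq_self.2 (by simpa using hpos))
  · exact Or.inr (List.filter_eq_nil_iff.2 (by simpa using hpos))

lemma List.filter_pos_isInfix {α : Type*} {f : α → ℝ} {P Q : List α} {u v : α}
    (hnd : (P ++ u :: v :: Q).Nodup)
    (hzero : ∀ x ∈ P ++ u :: v :: Q, f x = 0 ↔ x = u ∨ x = v)
    (hchain : (P ++ u :: v :: Q).IsChain (fun x y => 0 ≤ f x * f y))
    (hneg : ∃ x ∈ P ++ u :: v :: Q, f x < 0) :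
    (P ++ u :: v :: Q).filter (fun x => 0 < f x) <:+: P ++ u :: v :: Q := by
  have hu : f u = 0 := (hzero u (by simp)).2 (Or.inl rfl)
  have hv : f v = 0 := (hzero v (by simp)).2 (Or.inr rfl)
  simp only [List.nodup_append, List.nodup_cons, List.mem_cons, not_or] at hnd
  have hP0 : ∀ x ∈ P, f x ≠ 0 := fun x hx h =>
    ((hzero x (by simp [hx])).1 h).elim (hnd.2.2 x hx u (by simp)) (hnd.2.2 x hx v (by simp))
  have hQ0 : ∀ x ∈ Q, f x ≠ 0 := fun x hx h =>
    ((hzero x (by simp [hx])).1 h).elim (fun h => hnd.2.1.1.2 (h ▸ hx))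
      (fun h => hnd.2.1.2.1 (h ▸ hx))
  have hP := List.filter_pos_eq_self_or_nil hP0 (hchain.left_of_append)
  have hQ := List.filter_pos_eq_self_or_nil hQ0 (hchain.right_of_append.tail.tail)
  simp only [List.filter_append, List.filter_cons, hu, hv, lt_self_iff_false, decide_false,
    Bool.false_eq_true, if_false]
  rcases hP with hP | hP <;> rcases hQ with hQ | hQ <;> rw [hP, hQ]
  · exfalso
    obtain ⟨x, hx, hxneg⟩ := hneg
    have hpos : ∀ y ∈ P ++ Q, 0 < f y := by
      intro y hy
      rw [← hP, ← hQ, ← List.filter_append] at hy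
      simpa using (List.mem_filter.1 hy).2
    simp only [List.mem_append, List.mem_cons] at hx
    rcases hx with hx | rfl | rfl | hx
    · linarith [hpos x (List.mem_append_left _ hx)]
    · linarith
    · linarith
    · linarith [hpos x (List.mem_append_right _ hx)]
  · exact ⟨[], u :: v :: Q, by simp⟩
  · exact ⟨P ++ [u, v], [], by simp⟩
  · exact List.nil_infix

namespace PlanePath

variable {S : Finset Pt} {l : List Pt} {a b : Pt}

lemma mem_of_mem (hl : PlanePath S l) {x : Pt} (hx : x ∈ l) : x ∈ S := by
  rw [← hl.2.1]
  exact List.mem_toFinset.2 hx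

/-- An edge of the path crossing the line `ab` would meet the convex hull of `S` on that line,
hence inside the edge `ab` of the path. -/
lemma det3_mul_nonneg_of_mem_edgeList (hl : PlanePath S l) (hab : a ≠ b) (hav : HullVertex S a)
    (hbv : HullVertex S b) (hedge : (a, b) ∈ edgeList l) {x y : Pt}
    (hxy : (x, y) ∈ edgeList l) : 0 ≤ det3 a b x * det3 a b y := by
  by_contra! hneg
  obtain ⟨z, hzxy, hz⟩ := exists_mem_segment_det3_eq_zero hneg
  have hxl := (List.of_mem_zip hxy).1
  have hyl := List.mem_of_mem_tail (List.of_mem_zip hxy).2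
  have hzab : z ∈ segment ℝ a b := mem_segment_of_det3_eq_zero hab hav hbv
    (segment_subset_convexHull (hl.mem_of_mem hxl) (hl.mem_of_mem hyl) hzxy) hz
  have hx0 : det3 a b x ≠ 0 := left_ne_zero_of_mul hneg.ne
  have hy0 : det3 a b y ≠ 0 := right_ne_zero_of_mul hneg.ne
  have hne : (x, y) ≠ (a, b) := fun h => hx0 (by rw [(Prod.mk.inj h).1, det3_left])
  rcases (hl.2.2 _ hxy _ hedge hne ⟨hzxy, hzab⟩).1 with rfl | rfl
  · exact hx0 hz
  · exact hy0 hz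

lemma isChain_det3_mul_nonneg (hl : PlanePath S l) (hab : a ≠ b) (hav : HullVertex S a)
    (hbv : HullVertex S b) (hedge : IsEdgeOf a b l) :
    l.IsChain (fun x y => 0 ≤ det3 a b x * det3 a b y) := by
  refine isChain_iff_forall_mem_edgeList.2 fun x y hxy => ?_
  rcases hedge with h | h
  · exact hl.det3_mul_nonneg_of_mem_edgeList hab hav hbv h hxy
  · have := hl.det3_mul_nonneg_of_mem_edgeList hab.symm hbv hav h hxy
    rwa [det3_swap a b x, det3_swap a b y, neg_mul_neg] at this

/-- The three points on the positive side of `ab` are consecutive on the path, so the middle one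
is joined to the other two. -/
lemma exists_forall_isEdgeOf_of_card_eq_three (hl : PlanePath S l) (hgp : GenPos S)
    (ha : a ∈ S) (hb : b ∈ S) (hab : a ≠ b) (hav : HullVertex S a) (hbv : HullVertex S b)
    (hedge : IsEdgeOf a b l) (h3 : (S.filter (fun p => 0 < det3 a b p)).card = 3)
    (hneg : ∃ p ∈ S, det3 a b p < 0) :
    ∃ m ∈ S.filter (fun p => 0 < det3 a b p),
      ∀ x ∈ S.filter (fun p => 0 < det3 a b p), x ≠ m → IsEdgeOf m x l := by
  obtain ⟨u, v, ⟨P, Q, rfl⟩, huv⟩ : ∃ u v, (∃ P Q, l = P ++ u :: v :: Q) ∧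
      ({u, v} : Set Pt) = {a, b} := by
    rcases hedge with h | h
    · exact ⟨a, b, mem_edgeList_iff.1 h, rfl⟩
    · exact ⟨b, a, mem_edgeList_iff.1 h, Set.pair_comm b a⟩
  have hzero : ∀ x ∈ P ++ u :: v :: Q, det3 a b x = 0 ↔ x = u ∨ x = v := by
    intro x hx
    have hx' : x ∈ ({u, v} : Set Pt) ↔ x ∈ ({a, b} : Set Pt) := by rw [huv]
    simp only [Set.mem_insert_iff, Set.mem_singleton_iff] at hx'
    rw [hx']
    refine ⟨fun h => ?_, by rintro (h | h) <;> simp [h]⟩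
    by_contra! hxab
    exact hgp.det3_ne_zero ha hb (hl.mem_of_mem hx) hab hxab.1 hxab.2 h
  have hblock := List.filter_pos_isInfix hl.1 hzero (hl.isChain_det3_mul_nonneg hab hav hbv hedge)
    (hneg.imp fun _ hp => ⟨List.mem_toFinset.1 (hl.2.1 ▸ hp.1), hp.2⟩)
  set M := (P ++ u :: v :: Q).filter (fun x => 0 < det3 a b x)
  have hMS : M.toFinset = S.filter (fun p => 0 < det3 a b p) := by
    rw [← hl.2.1, List.toFinset_filter]
    simp
  have hlen : M.length = 3 := by
    rw [← List.toFinset_card_of_nodup (hl.1.filter _), hMS, h3]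
  obtain ⟨p, q, r, hpqr⟩ := List.length_eq_three.1 hlen
  have hmem : ∀ x, x ∈ S.filter (fun p => 0 < det3 a b p) ↔ x = p ∨ x = q ∨ x = r := by
    intro x
    rw [← hMS, List.mem_toFinset, hpqr]
    simp
  rw [hpqr] at hblock
  refine ⟨q, (hmem q).2 (by simp), fun x hx hxq => ?_⟩
  rcases (hmem x).1 hx with rfl | rfl | rfl
  · exact Or.inr (mem_edgeList_of_isInfix hblock (by simp [edgeList]))
  · exact absurd rfl hxq
  · exact Or.inl (mem_edgeList_of_isInfix hblock (by simp [edgeList]))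

end PlanePath

lemma exists_rel_and_rel_of_forall_rel {α : Type*} {T : Finset α} (hT : 1 < T.card)
    {R₁ R₂ : α → α → Prop} (hR₂ : ∀ x y, R₂ x y → R₂ y x) {m₁ m₂ : α}
    (hm₁ : m₁ ∈ T) (hm₂ : m₂ ∈ T)
    (h₁ : ∀ x ∈ T, x ≠ m₁ → R₁ m₁ x) (h₂ : ∀ x ∈ T, x ≠ m₂ → R₂ m₂ x) :
    ∃ x ∈ T, ∃ y, R₁ x y ∧ R₂ x y := by
  by_cases hm : m₁ = m₂
  · subst hm
    obtain ⟨x, hx, hxm⟩ := (Finset.one_lt_card_iff_nontrivial.1 hT).exists_ne m₁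
    exact ⟨m₁, hm₁, x, h₁ x hx hxm, h₂ x hx hxm⟩
  · exact ⟨m₁, hm₁, m₂, h₁ m₂ hm₂ (Ne.symm hm), hR₂ _ _ (h₂ m₁ hm₁ hm)⟩

lemma not_sharesExactly_of_card_pos_side_eq_three {S : Finset Pt} (hgp : GenPos S) {a b : Pt}
    (ha : a ∈ S) (hb : b ∈ S) (hab : a ≠ b) (hav : HullVertex S a) (hbv : HullVertex S b)
    (h3 : (S.filter (fun p => 0 < det3 a b p)).card = 3)
    (h1 : 1 ≤ (S.filter (fun p => det3 a b p < 0)).card) {l₁ l₂ : List Pt}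
    (hl₁ : PlanePath S l₁) (hl₂ : PlanePath S l₂) : ¬SharesExactly a b l₁ l₂ := by
  rintro ⟨he₁, he₂, hsh⟩
  have hneg : ∃ p ∈ S, det3 a b p < 0 := by
    obtain ⟨p, hp⟩ := Finset.card_pos.1 h1
    exact ⟨p, Finset.mem_filter.1 hp⟩
  obtain ⟨m₁, hm₁, h₁⟩ :=
    hl₁.exists_forall_isEdgeOf_of_card_eq_three hgp ha hb hab hav hbv he₁ h3 hneg
  obtain ⟨m₂, hm₂, h₂⟩ :=
    hl₂.exists_forall_isEdgeOf_of_card_eq_three hgp ha hb hab hav hbv he₂ h3 hneg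
  obtain ⟨x, hx, y, hxy₁, hxy₂⟩ := exists_rel_and_rel_of_forall_rel
    (R₁ := (IsEdgeOf · · l₁)) (R₂ := (IsEdgeOf · · l₂)) (by omega) (fun _ _ => IsEdgeOf.symm)
    hm₁ hm₂ h₁ h₂
  have hxab : x ∈ ({a, b} : Set Pt) := hsh x y hxy₁ hxy₂ ▸ Set.mem_insert x {y}
  rcases hxab with rfl | rfl <;> simp at hx

/-- If `a, b` are hull vertices such that one open halfplane of `ℓ(ab)`
contains exactly 3 points of `S` and the other at least 1, then no two plane Hamiltonian
paths on `S` share exactly the edge `ab`. -/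
theorem stmt_10 (S : Finset Pt) (hgp : GenPos S)
    (a b : Pt) (ha : a ∈ S) (hb : b ∈ S) (hab : a ≠ b)
    (hav : HullVertex S a) (hbv : HullVertex S b)
    (hcount :
      ((S.filter (fun p => 0 < det3 a b p)).card = 3 ∧
        1 ≤ (S.filter (fun p => det3 a b p < 0)).card) ∨
      ((S.filter (fun p => det3 a b p < 0)).card = 3 ∧
        1 ≤ (S.filter (fun p => 0 < det3 a b p)).card)) :
    ¬ ∃ l₁ l₂ : List Pt, PlanePath S l₁ ∧ PlanePath S l₂ ∧ SharesExactly a b l₁ l₂ := by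
  rintro ⟨l₁, l₂, hl₁, hl₂, hsh⟩
  rcases hcount with ⟨h3, h1⟩ | ⟨h3, h1⟩
  · exact not_sharesExactly_of_card_pos_side_eq_three hgp ha hb hab hav hbv h3 h1 hl₁ hl₂ hsh
  · simp_rw [← neg_pos, ← neg_lt_zero (a := det3 a b _), ← det3_swap] at h3 h1
    refine not_sharesExactly_of_card_pos_side_eq_three hgp hb ha hab.symm hbv hav h3 h1 hl₁ hl₂ ?_
    obtain ⟨he₁, he₂, h⟩ := hsh
    exact ⟨he₁.symm, he₂.symm, fun x y hx hy => by rw [h x y hx hy, Set.pair_comm]⟩
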